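/- arXiv:2305.02250 — 4 statements merged into one kernel-verified Lean document; each statement's English description precedes it below -/
import Mathlib

section
/- Let ν be a lattice path. Every linear interval of length 2 in the ν-Dyck lattice D(ν) is either a left interval or a right interval. -/
/-!
Common definitions for the paper "The alt ν-Tamari lattices".

A lattice path ν from (0,0) to (m,n) is encoded as the list (ν_0, ..., ν_n)
of its east-step block lengths (ν_0 initial east steps, ν_i the east steps
immediately following the i-th north step).  Thus `ν.length = n + 1` and
`ν.sum = m`.
-/

/-- `μ` is a ν-path: same endpoints as `ν` and weakly above `ν`. -/
def IsNuPath (ν μ : List ℕ) : Prop :=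
  μ.length = ν.length ∧ (∀ j : ℕ, (μ.take j).sum ≤ (ν.take j).sum) ∧ μ.sum = ν.sum

/-! ### The ν-Dyck lattice -/

/-- The Dyck order: `P ≤ Q` iff `Q` lies weakly above `P`. -/
def dyckLE (P Q : List ℕ) : Prop := ∀ j : ℕ, (Q.take j).sum ≤ (P.take j).sum

/-- Covering relation of the ν-Dyck lattice. -/
def dyckCovBy (ν P Q : List ℕ) : Prop :=
  IsNuPath ν P ∧ IsNuPath ν Q ∧ dyckLE P Q ∧ P ≠ Q ∧
    ∀ R, IsNuPath ν R → dyckLE P R → dyckLE R Q → R = P ∨ R = Q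

/-- `[P,Q]` is a linear interval of length `ℓ` in the ν-Dyck lattice:
the interval is totally ordered and there is a maximal chain of length `ℓ`
from `P` to `Q`. -/
def IsDyckLinear (ν P Q : List ℕ) (ℓ : ℕ) : Prop :=
  IsNuPath ν P ∧ IsNuPath ν Q ∧ dyckLE P Q ∧
  (∀ R S, IsNuPath ν R → IsNuPath ν S → dyckLE P R → dyckLE R Q →
    dyckLE P S → dyckLE S Q → dyckLE R S ∨ dyckLE S R) ∧
  ∃ c : ℕ → List ℕ, c 0 = P ∧ c ℓ = Q ∧ ∀ k, k < ℓ → dyckCovBy ν (c k) (c (k + 1))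

/-- `[P,Q]` is a left interval in the ν-Dyck lattice: `Q` is obtained from `P`
by replacing a consecutive subword `E^ℓ N` by `N E^ℓ` (the `ℓ` east steps are
moved from the block before the `(i+1)`-st north step to the block after it). -/
def IsLeftDyck (ν P Q : List ℕ) (ℓ : ℕ) : Prop :=
  IsNuPath ν P ∧ IsNuPath ν Q ∧ 1 ≤ ℓ ∧
  ∃ i, i + 1 < P.length ∧ ℓ ≤ P.getD i 0 ∧
    Q = (P.set i (P.getD i 0 - ℓ)).set (i + 1) (P.getD (i + 1) 0 + ℓ)

/-- `[P,Q]` is a right interval in the ν-Dyck lattice: `Q` is obtained from `P`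
by replacing a consecutive subword `E N^ℓ` by `N^ℓ E`. -/
def IsRightDyck (ν P Q : List ℕ) (ℓ : ℕ) : Prop :=
  IsNuPath ν P ∧ IsNuPath ν Q ∧ 1 ≤ ℓ ∧
  ∃ i, i + ℓ < P.length ∧ 1 ≤ P.getD i 0 ∧ (∀ j, i < j → j < i + ℓ → P.getD j 0 = 0) ∧
    Q = (P.set i (P.getD i 0 - 1)).set (i + ℓ) (P.getD (i + ℓ) 0 + 1)

/-! ### Increment vectors, δ-rotations and alt ν-Tamari posets -/

/-- `δ = (δ_1, …, δ_n)` is an increment vector with respect to `ν`: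
`δ_i ≤ ν_i` for `1 ≤ i ≤ n`.  (List index `i` of `δ` holds `δ_{i+1}`.) -/
def IsIncrement (ν δ : List ℕ) : Prop :=
  δ.length + 1 = ν.length ∧ ∀ i, i < δ.length → δ.getD i 0 ≤ ν.getD (i + 1) 0

/-- `μ'` is the δ-rotation of `μ` at the valley preceding the `(i+1)`-st north
step.  The δ-excursion starting with the `(i+1)`-st north step ends in block `k`
(the first block where the δ-altitude returns to its value at the valley), and
the east step of the valley is exchanged with this excursion, i.e. moved from
block `i` to block `k`. -/
def IsDeltaRotation (δ μ μ' : List ℕ) (i : ℕ) : Prop :=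
  i + 1 < μ.length ∧ 1 ≤ μ.getD i 0 ∧
  ∃ k, i < k ∧ k < μ.length ∧
    (∑ t ∈ Finset.Ico i k, δ.getD t 0) ≤ (∑ t ∈ Finset.Ico (i + 1) (k + 1), μ.getD t 0) ∧
    (∀ k', i < k' → k' < k →
      (∑ t ∈ Finset.Ico (i + 1) (k' + 1), μ.getD t 0) < (∑ t ∈ Finset.Ico i k', δ.getD t 0)) ∧
    μ' = (μ.set i (μ.getD i 0 - 1)).set k (μ.getD k 0 + 1)

/-- `Q` is obtained from `P` by a δ-rotation at some valley. -/
def DRot (δ P Q : List ℕ) : Prop := ∃ i, IsDeltaRotation δ P Q i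

/-- The alt ν-Tamari order: reflexive transitive closure of δ-rotations. -/
def altLE (δ : List ℕ) : List ℕ → List ℕ → Prop := Relation.ReflTransGen (DRot δ)

/-- The path ν̌ = (ν̌_0, δ_1, …, δ_n) with ν̌_0 = Σν_i − Σδ_i. -/
def nuCheck (ν δ : List ℕ) : List ℕ := (ν.sum - δ.sum) :: δ

/-- `μ'` is the ω-rotation (in the sense of the ν-Tamari lattice, defined via
the ω-altitude `alt_ω(x,y) = ω_0 + ⋯ + ω_y − x`) of `μ` at the valley preceding
the `(i+1)`-st north step: the east step of the valley is exchanged with the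
subpath from the valley to the next lattice point of the same ω-altitude,
which ends in block `k`. -/
def IsNuRotation (ω μ μ' : List ℕ) (i : ℕ) : Prop :=
  i + 1 < μ.length ∧ 1 ≤ μ.getD i 0 ∧
  ∃ k, i < k ∧ k < μ.length ∧
    (ω.take (k + 1)).sum + (μ.take (i + 1)).sum ≤
      (ω.take (i + 1)).sum + (μ.take (k + 1)).sum ∧
    (∀ k', i < k' → k' < k →
      (ω.take (i + 1)).sum + (μ.take (k' + 1)).sum <
        (ω.take (k' + 1)).sum + (μ.take (i + 1)).sum) ∧
    μ' = (μ.set i (μ.getD i 0 - 1)).set k (μ.getD k 0 + 1)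

/-- The ω-Tamari order on ω-paths: closure of ω-rotations. -/
def tamLE (ω : List ℕ) : List ℕ → List ℕ → Prop :=
  Relation.ReflTransGen (fun P Q => ∃ i, IsNuRotation ω P Q i)

/-- Covering relation of the alt ν-Tamari poset `T_ν(δ)`. -/
def altCovBy (ν δ P Q : List ℕ) : Prop :=
  IsNuPath ν P ∧ IsNuPath ν Q ∧ altLE δ P Q ∧ P ≠ Q ∧
    ∀ R, IsNuPath ν R → altLE δ P R → altLE δ R Q → R = P ∨ R = Q

/-- `[P,Q]` is a linear interval of length `ℓ` in the alt ν-Tamari poset. -/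
def IsAltLinear (ν δ P Q : List ℕ) (ℓ : ℕ) : Prop :=
  IsNuPath ν P ∧ IsNuPath ν Q ∧ altLE δ P Q ∧
  (∀ R S, IsNuPath ν R → IsNuPath ν S → altLE δ P R → altLE δ R Q →
    altLE δ P S → altLE δ S Q → altLE δ R S ∨ altLE δ S R) ∧
  ∃ c : ℕ → List ℕ, c 0 = P ∧ c ℓ = Q ∧ ∀ k, k < ℓ → altCovBy ν δ (c k) (c (k + 1))

/-! ### ω-trees -/

/-- The lattice points of the Ferrers diagram `F_ω` weakly above `ω`:
points `(x,y)` with `0 ≤ y ≤ n` and `x ≤ ω_0 + ⋯ + ω_y`. -/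
def Lpts (ω : List ℕ) : Set (ℕ × ℕ) :=
  {p : ℕ × ℕ | p.2 < ω.length ∧ p.1 ≤ (ω.take (p.2 + 1)).sum}

/-- `p` and `q` are ω-incompatible: one is strictly southwest of the other and
the smallest rectangle containing them lies in `F_ω` (equivalently, its
bottom-right corner is a lattice point of `F_ω`). -/
def Incomp (ω : List ℕ) (p q : ℕ × ℕ) : Prop :=
  ((p.1 < q.1 ∧ p.2 < q.2) ∨ (q.1 < p.1 ∧ q.2 < p.2)) ∧
    (max p.1 q.1, min p.2 q.2) ∈ Lpts ω

/-- All elements of `T` are pairwise ω-compatible. -/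
def PairwiseCompat (ω : List ℕ) (T : Set (ℕ × ℕ)) : Prop :=
  ∀ p ∈ T, ∀ q ∈ T, ¬ Incomp ω p q

/-- An ω-tree: a maximal collection of pairwise ω-compatible points of `L_ω`. -/
def IsTree (ω : List ℕ) (T : Set (ℕ × ℕ)) : Prop :=
  T ⊆ Lpts ω ∧ PairwiseCompat ω T ∧
    ∀ T', T ⊆ T' → T' ⊆ Lpts ω → PairwiseCompat ω T' → T' = T

/-- The ω-rotation of `T` at `q`: there are `p, r ∈ T` with `q` the lower-left
corner of the rectangle `p□r` (so `p` is above `q` in its column and `r` to the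
right of `q` in its row), no other element of `T` lies in `p□r`, and `T'` is
obtained by replacing `q` by the upper-right corner of `p□r`. -/
def RotationAt (ω : List ℕ) (T : Set (ℕ × ℕ)) (q : ℕ × ℕ) (T' : Set (ℕ × ℕ)) : Prop :=
  ∃ p r, p ∈ T ∧ q ∈ T ∧ r ∈ T ∧ p.1 = q.1 ∧ q.2 < p.2 ∧ r.2 = q.2 ∧ q.1 < r.1 ∧
    (∀ s ∈ T, q.1 ≤ s.1 → s.1 ≤ r.1 → q.2 ≤ s.2 → s.2 ≤ p.2 → s = p ∨ s = q ∨ s = r) ∧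
    T' = insert (r.1, p.2) (T \ {q})

/-- `T'` is obtained from `T` by an ω-rotation. -/
def TreeRotation (ω : List ℕ) (T T' : Set (ℕ × ℕ)) : Prop := ∃ q, RotationAt ω T q T'

/-- One rotation step between ω-trees. -/
def tRot (ω : List ℕ) (T T' : Set (ℕ × ℕ)) : Prop :=
  IsTree ω T ∧ IsTree ω T' ∧ TreeRotation ω T T'

/-- The rotation order on ω-trees. -/
def treeLE (ω : List ℕ) : Set (ℕ × ℕ) → Set (ℕ × ℕ) → Prop :=
  Relation.ReflTransGen (tRot ω)

/-- Covering relation of the rotation poset of ω-trees. -/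
def treeCovBy (ω : List ℕ) (T T' : Set (ℕ × ℕ)) : Prop :=
  IsTree ω T ∧ IsTree ω T' ∧ treeLE ω T T' ∧ T ≠ T' ∧
    ∀ R, IsTree ω R → treeLE ω T R → treeLE ω R T' → R = T ∨ R = T'

/-- `[T,T']` is a linear interval of length `ℓ` in the rotation poset of ω-trees. -/
def IsTreeLinear (ω : List ℕ) (T T' : Set (ℕ × ℕ)) (ℓ : ℕ) : Prop :=
  IsTree ω T ∧ IsTree ω T' ∧ treeLE ω T T' ∧
  (∀ R S, IsTree ω R → IsTree ω S → treeLE ω T R → treeLE ω R T' →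
    treeLE ω T S → treeLE ω S T' → treeLE ω R S ∨ treeLE ω S R) ∧
  ∃ c : ℕ → Set (ℕ × ℕ), c 0 = T ∧ c ℓ = T' ∧ ∀ k, k < ℓ → treeCovBy ω (c k) (c (k + 1))

/-- `q 0, …, q ℓ` is a sequence of consecutive nodes of `T` in the same row,
ordered from left to right. -/
def ConsecRow (T : Set (ℕ × ℕ)) (q : ℕ → ℕ × ℕ) (ℓ : ℕ) : Prop :=
  (∀ i, i ≤ ℓ → q i ∈ T) ∧ (∀ i, i ≤ ℓ → (q i).2 = (q 0).2) ∧
  (∀ i, i < ℓ → (q i).1 < (q (i + 1)).1) ∧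
  (∀ i, i < ℓ → ∀ s ∈ T, s.2 = (q 0).2 → (q i).1 < s.1 → s.1 < (q (i + 1)).1 → False)

/-- `q 0, …, q ℓ` is a sequence of consecutive nodes of `T` in the same column,
ordered from bottom to top. -/
def ConsecCol (T : Set (ℕ × ℕ)) (q : ℕ → ℕ × ℕ) (ℓ : ℕ) : Prop :=
  (∀ i, i ≤ ℓ → q i ∈ T) ∧ (∀ i, i ≤ ℓ → (q i).1 = (q 0).1) ∧
  (∀ i, i < ℓ → (q i).2 < (q (i + 1)).2) ∧
  (∀ i, i < ℓ → ∀ s ∈ T, s.1 = (q 0).1 → (q i).2 < s.2 → s.2 < (q (i + 1)).2 → False)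

/-- `[T,T']` is a left interval of length `ℓ` in the rotation poset of ω-trees:
`T'` is obtained from `T` by applying `ℓ > 0` successive rotations at the first
`ℓ` nodes of a sequence `q 0, …, q ℓ` of consecutive nodes of `T` in the same
row, from left to right. -/
def IsLeftTreeItv (ω : List ℕ) (T T' : Set (ℕ × ℕ)) (ℓ : ℕ) : Prop :=
  IsTree ω T ∧ 1 ≤ ℓ ∧
  ∃ q : ℕ → ℕ × ℕ, ConsecRow T q ℓ ∧
    ∃ c : ℕ → Set (ℕ × ℕ), c 0 = T ∧ c ℓ = T' ∧
      ∀ k, k < ℓ → RotationAt ω (c k) (q k) (c (k + 1))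

/-- `[T,T']` is a right interval of length `ℓ` in the rotation poset of ω-trees:
`T'` is obtained from `T` by applying `ℓ > 0` successive rotations at the first
`ℓ` nodes of a sequence `q 0, …, q ℓ` of consecutive nodes of `T` in the same
column, from bottom to top. -/
def IsRightTreeItv (ω : List ℕ) (T T' : Set (ℕ × ℕ)) (ℓ : ℕ) : Prop :=
  IsTree ω T ∧ 1 ≤ ℓ ∧
  ∃ q : ℕ → ℕ × ℕ, ConsecCol T q ℓ ∧
    ∃ c : ℕ → Set (ℕ × ℕ), c 0 = T ∧ c ℓ = T' ∧
      ∀ k, k < ℓ → RotationAt ω (c k) (q k) (c (k + 1))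

/-! ### (δ,ν)-trees -/

/-- The lattice points `L_{δ,ν}` of the shape `F_{δ,ν}`: points of `L_ν̌` lying
weakly above the path ν̂ = W^{ν_0} N W^{ν_1−δ_1} ⋯ N W^{ν_n−δ_n} starting at
`(ν̌_0, 0)`.  At height `y` these are the `x` with
`ν̌_0 − ν_0 − Σ_{i≤y}(ν_i−δ_i) ≤ x ≤ ν̌_0 + δ_1 + ⋯ + δ_y`, written here without
natural subtraction. -/
def Ldn (ν δ : List ℕ) : Set (ℕ × ℕ) :=
  {p : ℕ × ℕ | p.2 < ν.length ∧
    ν.sum ≤ p.1 + (ν.take (p.2 + 1)).sum + (δ.drop p.2).sum ∧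
    p.1 ≤ ((nuCheck ν δ).take (p.2 + 1)).sum}

/-- A (δ,ν)-tree: a maximal collection of pairwise ν̌-compatible points of `L_{δ,ν}`. -/
def IsDNTree (ν δ : List ℕ) (T : Set (ℕ × ℕ)) : Prop :=
  T ⊆ Ldn ν δ ∧ PairwiseCompat (nuCheck ν δ) T ∧
    ∀ T', T ⊆ T' → T' ⊆ Ldn ν δ → PairwiseCompat (nuCheck ν δ) T' → T' = T

/-- One ν̌-rotation step between (δ,ν)-trees. -/
def dnRot (ν δ : List ℕ) (T T' : Set (ℕ × ℕ)) : Prop :=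
  IsDNTree ν δ T ∧ IsDNTree ν δ T' ∧ TreeRotation (nuCheck ν δ) T T'

/-- The rotation order on (δ,ν)-trees. -/
def dnLE (ν δ : List ℕ) : Set (ℕ × ℕ) → Set (ℕ × ℕ) → Prop :=
  Relation.ReflTransGen (dnRot ν δ)

/-- Covering relation of the rotation poset of (δ,ν)-trees. -/
def dnCovBy (ν δ : List ℕ) (T T' : Set (ℕ × ℕ)) : Prop :=
  IsDNTree ν δ T ∧ IsDNTree ν δ T' ∧ dnLE ν δ T T' ∧ T ≠ T' ∧
    ∀ R, IsDNTree ν δ R → dnLE ν δ T R → dnLE ν δ R T' → R = T ∨ R = T'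

/-- `[T,T']` is a left interval of length `ℓ` in the rotation poset of (δ,ν)-trees. -/
def IsLeftDNItv (ν δ : List ℕ) (T T' : Set (ℕ × ℕ)) (ℓ : ℕ) : Prop :=
  IsDNTree ν δ T ∧ 1 ≤ ℓ ∧
  ∃ q : ℕ → ℕ × ℕ, ConsecRow T q ℓ ∧
    ∃ c : ℕ → Set (ℕ × ℕ), c 0 = T ∧ c ℓ = T' ∧
      ∀ k, k < ℓ → RotationAt (nuCheck ν δ) (c k) (q k) (c (k + 1))

/-- `[T,T']` is a right interval of length `ℓ` in the rotation poset of (δ,ν)-trees. -/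
def IsRightDNItv (ν δ : List ℕ) (T T' : Set (ℕ × ℕ)) (ℓ : ℕ) : Prop :=
  IsDNTree ν δ T ∧ 1 ≤ ℓ ∧
  ∃ q : ℕ → ℕ × ℕ, ConsecCol T q ℓ ∧
    ∃ c : ℕ → Set (ℕ × ℕ), c 0 = T ∧ c ℓ = T' ∧
      ∀ k, k < ℓ → RotationAt (nuCheck ν δ) (c k) (q k) (c (k + 1))

/-! ### Row vectors, column vectors, reduced column vectors -/

/-- Number of points of `T` at height `y`. -/
noncomputable def rowN (T : Set (ℕ × ℕ)) (y : ℕ) : ℕ := {p ∈ T | p.2 = y}.ncard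

/-- Number of points of `T` in column `x`. -/
noncomputable def colTN (T : Set (ℕ × ℕ)) (x : ℕ) : ℕ := {p ∈ T | p.1 = x}.ncard

/-- Number of points of `L_{δ,ν}` in column `x`. -/
noncomputable def colN (ν δ : List ℕ) (x : ℕ) : ℕ := {p ∈ Ldn ν δ | p.1 = x}.ncard

/-- `p` is a relevant point of `L_{δ,ν}`: it is not the leftmost point of its row. -/
def Relevant (ν δ : List ℕ) (p : ℕ × ℕ) : Prop :=
  p ∈ Ldn ν δ ∧ ∃ q ∈ Ldn ν δ, q.2 = p.2 ∧ q.1 < p.1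

/-- Number of relevant points of `L_{δ,ν}` in column `x` (the reduced column at `x`). -/
noncomputable def rcolN (ν δ : List ℕ) (x : ℕ) : ℕ := {p ∈ Ldn ν δ | p.1 = x ∧ Relevant ν δ p}.ncard

/-- Number of points of `T` in the reduced column at `x`. -/
noncomputable def rcolTN (ν δ : List ℕ) (T : Set (ℕ × ℕ)) (x : ℕ) : ℕ :=
  {p ∈ T | p.1 = x ∧ Relevant ν δ p}.ncard

/-- `j` lists the columns `j 0, …, j m` of `L_{δ,ν}` from shortest to longest,
reading from right to left among columns of equal length (here `m = ν.sum`). -/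
def ColOrder (ν δ : List ℕ) (j : ℕ → ℕ) : Prop :=
  (∀ i, i ≤ ν.sum → j i ≤ ν.sum) ∧
  (∀ i i', i ≤ ν.sum → i' ≤ ν.sum → j i = j i' → i = i') ∧
  (∀ i i', i < i' → i' ≤ ν.sum →
    colN ν δ (j i) < colN ν δ (j i') ∨ (colN ν δ (j i) = colN ν δ (j i') ∧ j i' < j i))

/-- `j` lists the reduced columns `j 0, …, j (m-1)` of `L_{δ,ν}` from shortest to
longest, reading from right to left among reduced columns of equal length. -/
def RColOrder (ν δ : List ℕ) (j : ℕ → ℕ) : Prop :=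
  (∀ i, i < ν.sum → 1 ≤ j i ∧ j i ≤ ν.sum) ∧
  (∀ i i', i < ν.sum → i' < ν.sum → j i = j i' → i = i') ∧
  (∀ i i', i < i' → i' < ν.sum →
    rcolN ν δ (j i) < rcolN ν δ (j i') ∨ (rcolN ν δ (j i) = rcolN ν δ (j i') ∧ j i' < j i))

/-- The entry `←ν_i` of the reversed path of `ν`: the number of north steps of
`ν` in column `m − i`. -/
def revNu (ν : List ℕ) (i : ℕ) : ℕ :=
  ((Finset.Ico 1 ν.length).filter (fun t => (ν.take t).sum + i = ν.sum)).card


/-!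
A ν-path is determined by its prefix sums, and `Q` lies above `P` exactly when every prefix sum
of `Q` is at most the corresponding one of `P`. A cover lowers a single prefix sum by one, i.e. it
moves one east step of `P` across the next north step. Along a chain `P ⋖ R ⋖ Q` either the same
prefix sum is lowered twice, which is the left interval `E²N ↦ NE²`, or two prefix sums at
positions `a < b` are lowered once each. In the second case lowering only the one at `b` must fail
to give a ν-path, since otherwise it and `R` would be incomparable elements of `[P, Q]`; so the
block of `P` just before `b` is empty, and as `Q` is a path this forces `b = a + 1`: the right
interval `EN² ↦ N²E`.
-/

namespace List

variable {M : Type*}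

theorem sum_take_add_one_eq_add_getD [AddMonoid M] (L : List M) (j : ℕ) :
    (L.take (j + 1)).sum = (L.take j).sum + L.getD j 0 := by
  rcases lt_or_ge j L.length with hj | hj
  · rw [sum_take_succ L j hj, getD_eq_getElem _ _ hj]
  · rw [take_of_length_le hj, take_of_length_le (by omega), getD_eq_default _ _ hj, add_zero]

/-- On a ν-path with `i < k`, this moves `w` east steps from block `i` to block `k`: left and
right intervals are `P.transfer i (i + 1) ℓ` and `P.transfer i (i + ℓ) 1`. -/
def transfer (L : List ℕ) (i k w : ℕ) : List ℕ :=
  (L.set i (L.getD i 0 - w)).set k (L.getD k 0 + w)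

variable {L L' : List ℕ} {i k w : ℕ}

theorem length_transfer : (L.transfer i k w).length = L.length := by
  simp [transfer]

theorem getD_transfer (hik : i ≠ k) (hk : k < L.length) (t : ℕ) :
    (L.transfer i k w).getD t 0 =
      if t = i then L.getD i 0 - w else if t = k then L.getD k 0 + w else L.getD t 0 := by
  simp only [transfer, getD_eq_getElem?_getD, getElem?_set, length_set]
  split_ifs <;> subst_vars <;> simp_all

theorem sum_take_transfer (hik : i < k) (hk : k < L.length) (hw : w ≤ L.getD i 0) (j : ℕ) :
    ((L.transfer i k w).take j).sum + (if i < j ∧ j ≤ k then w else 0) = (L.take j).sum := by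
  induction j with
  | zero => simp
  | succ j ih =>
    have hj := getD_transfer (w := w) hik.ne hk j
    rw [sum_take_add_one_eq_add_getD, sum_take_add_one_eq_add_getD]
    split_ifs at * <;> subst_vars <;> omega

theorem eq_transfer_of_sum_take (hlen : L'.length = L.length) (hik : i < k) (hk : k < L.length)
    (h : ∀ j, (L'.take j).sum + (if i < j ∧ j ≤ k then w else 0) = (L.take j).sum) :
    w ≤ L.getD i 0 ∧ L' = L.transfer i k w := by
  have hw : w ≤ L.getD i 0 := by
    have hi := h i
    have hi₁ := h (i + 1)
    rw [sum_take_add_one_eq_add_getD, sum_take_add_one_eq_add_getD] at hi₁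
    split_ifs at hi hi₁ <;> omega
  refine ⟨hw, eq_of_sum_take_eq (by rw [length_transfer, hlen]) fun j _ => ?_⟩
  have := h j
  have := sum_take_transfer hik hk hw j
  omega

end List

open List

variable {ν P Q : List ℕ} {i k w : ℕ}

theorem IsNuPath.transfer (hP : IsNuPath ν P) (hik : i < k) (hk : k < P.length)
    (hw : w ≤ P.getD i 0) : IsNuPath ν (P.transfer i k w) := by
  refine ⟨length_transfer.trans hP.1, fun j => ?_, ?_⟩
  · have := sum_take_transfer hik hk hw j
    have := hP.2.1 j
    omega
  · have h := sum_take_transfer hik hk hw P.length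
    rw [take_of_length_le length_transfer.le, take_of_length_le le_rfl, if_neg (by omega),
      add_zero] at h
    exact h.trans hP.2.2

theorem dyckLE_transfer (hik : i < k) (hk : k < P.length) (hw : w ≤ P.getD i 0) :
    dyckLE P (P.transfer i k w) := fun j => by
  have := sum_take_transfer hik hk hw j
  omega

theorem dyckCovBy.exists_eq_transfer (h : dyckCovBy ν P Q) :
    ∃ i, i + 1 < P.length ∧ 1 ≤ P.getD i 0 ∧ Q = P.transfer i (i + 1) 1 := by
  classical
  obtain ⟨hP, hQ, hPQ, hne, hmin⟩ := h
  have hex : ∃ j, (Q.take j).sum ≠ (P.take j).sum := by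
    by_contra! hc
    exact hne (eq_of_sum_take_eq (hQ.1.trans hP.1.symm) fun j _ => hc j).symm
  -- `i + 1` is the first position where the prefix sums of `P` and `Q` differ
  obtain ⟨i, hi⟩ : ∃ i, Nat.find hex = i + 1 :=
    Nat.exists_eq_add_one.mpr (Nat.pos_of_ne_zero fun h0 => Nat.find_spec hex (by simp [h0]))
  have hdiff := Nat.find_spec hex
  rw [hi] at hdiff
  have hsame : (Q.take i).sum = (P.take i).sum := not_not.mp (Nat.find_min hex (by omega))
  have hlt := lt_of_le_of_ne (hPQ (i + 1)) hdiff
  have hiP : i + 1 < P.length := by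
    by_contra! hle
    rw [take_of_length_le hle, take_of_length_le (by rw [hQ.1, ← hP.1]; exact hle)] at hdiff
    exact hdiff (hQ.2.2.trans hP.2.2.symm)
  have hPi : 1 ≤ P.getD i 0 := by
    rw [sum_take_add_one_eq_add_getD, sum_take_add_one_eq_add_getD] at hlt
    omega
  have hR := sum_take_transfer i.lt_add_one hiP hPi
  have hRQ : dyckLE (P.transfer i (i + 1) 1) Q := fun j => by
    rcases eq_or_ne j (i + 1) with rfl | hj
    · have := hR (i + 1)
      rw [if_pos ⟨i.lt_add_one, le_rfl⟩] at this
      omega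
    · have := hR j
      have := hPQ j
      split_ifs at * <;> omega
  refine ⟨i, hiP, hPi, ?_⟩
  rcases hmin _ (hP.transfer i.lt_add_one hiP hPi) (dyckLE_transfer i.lt_add_one hiP hPi) hRQ
    with hRP | hRQ
  · have := hR (i + 1)
    rw [hRP, if_pos ⟨i.lt_add_one, le_rfl⟩] at this
    omega
  · exact hRQ.symm

theorem isLeftDyck_of_sum_take (hP : IsNuPath ν P) (hQ : IsNuPath ν Q) (hi : i + 1 < P.length)
    (hsum : ∀ j, (Q.take j).sum + (if j = i + 1 then 2 else 0) = (P.take j).sum) :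
    IsLeftDyck ν P Q 2 := by
  obtain ⟨hw, rfl⟩ := eq_transfer_of_sum_take (hQ.1.trans hP.1.symm) i.lt_add_one hi
    fun j => by have := hsum j; split_ifs at * <;> omega
  exact ⟨hP, hQ, by norm_num, i, hi, hw, rfl⟩

theorem IsDyckLinear.getD_eq_zero {ℓ i' : ℕ} (h : IsDyckLinear ν P Q ℓ) (hii' : i < i')
    (hi' : i' + 1 < P.length) (hPi : 1 ≤ P.getD i 0)
    (hsum : ∀ j, (Q.take j).sum + (if j = i + 1 then 1 else 0) + (if j = i' + 1 then 1 else 0) =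
      (P.take j).sum) :
    P.getD i' 0 = 0 := by
  obtain ⟨hP, -, -, hlin, -⟩ := h
  -- otherwise moving an east step across the `(i'+1)`-st north step is a ν-path in `[P, Q]`
  -- incomparable with moving one across the `(i+1)`-st
  by_contra hne
  have hi : i + 1 < P.length := by omega
  have hPi' : 1 ≤ P.getD i' 0 := Nat.one_le_iff_ne_zero.mpr hne
  have h₁ := sum_take_transfer i.lt_add_one hi hPi
  have h₂ := sum_take_transfer i'.lt_add_one hi' hPi'
  have h₁Q : dyckLE (P.transfer i (i + 1) 1) Q := fun j => by
    have := hsum j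
    have := h₁ j
    split_ifs at * <;> omega
  have h₂Q : dyckLE (P.transfer i' (i' + 1) 1) Q := fun j => by
    have := hsum j
    have := h₂ j
    split_ifs at * <;> omega
  rcases hlin _ _ (hP.transfer i.lt_add_one hi hPi) (hP.transfer i'.lt_add_one hi' hPi')
    (dyckLE_transfer i.lt_add_one hi hPi) h₁Q (dyckLE_transfer i'.lt_add_one hi' hPi') h₂Q
    with h₁₂ | h₂₁
  · have := h₁₂ (i + 1)
    have := h₁ (i + 1)
    have := h₂ (i + 1)
    split_ifs at * <;> omega
  · have := h₂₁ (i' + 1)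
    have := h₁ (i' + 1)
    have := h₂ (i' + 1)
    split_ifs at * <;> omega

theorem isRightDyck_of_isDyckLinear {ℓ i' : ℕ} (h : IsDyckLinear ν P Q ℓ) (hii' : i < i')
    (hi' : i' + 1 < P.length)
    (hsum : ∀ j, (Q.take j).sum + (if j = i + 1 then 1 else 0) + (if j = i' + 1 then 1 else 0) =
      (P.take j).sum) :
    IsRightDyck ν P Q 2 := by
  have hPi : 1 ≤ P.getD i 0 := by
    have := hsum i
    have := hsum (i + 1)
    rw [sum_take_add_one_eq_add_getD, sum_take_add_one_eq_add_getD] at this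
    split_ifs at * <;> omega
  have hPi' := h.getD_eq_zero hii' hi' hPi hsum
  obtain rfl : i' = i + 1 := by
    have := hsum i'
    have := hsum (i' + 1)
    rw [sum_take_add_one_eq_add_getD, sum_take_add_one_eq_add_getD] at this
    split_ifs at * <;> omega
  obtain ⟨hP, hQ, -⟩ := h
  obtain ⟨-, rfl⟩ := eq_transfer_of_sum_take (i := i) (k := i + 2) (hQ.1.trans hP.1.symm)
    (by omega) hi' fun j => by have := hsum j; split_ifs at * <;> omega
  exact ⟨hP, hQ, by norm_num, i, hi', hPi, fun j hij hji => by rwa [show j = i + 1 by omega], rfl⟩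

theorem dyck_linear_length_two_left_or_right_general (ν P Q : List ℕ)
    (h : IsDyckLinear ν P Q 2) :
    (∃ ℓ, IsLeftDyck ν P Q ℓ) ∨ ∃ ℓ, IsRightDyck ν P Q ℓ := by
  obtain ⟨c, hc0, hc2, hcov⟩ := h.2.2.2.2
  have hP₁ : dyckCovBy ν P (c 1) := hc0 ▸ hcov 0 two_pos
  have h₁Q : dyckCovBy ν (c 1) Q := hc2 ▸ hcov 1 one_lt_two
  obtain ⟨i, hi, hPi, hc1⟩ := hP₁.exists_eq_transfer
  obtain ⟨i', hi', hci', hQ⟩ := h₁Q.exists_eq_transfer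
  have hlen : (c 1).length = P.length := hc1 ▸ length_transfer
  have hsum : ∀ j, (Q.take j).sum + (if j = i + 1 then 1 else 0) + (if j = i' + 1 then 1 else 0) =
      (P.take j).sum := fun j => by
    have h₀₁ := sum_take_transfer i.lt_add_one hi hPi j
    have h₁₂ := sum_take_transfer i'.lt_add_one hi' hci' j
    rw [← hc1] at h₀₁
    rw [← hQ] at h₁₂
    split_ifs at * <;> omega
  rcases lt_trichotomy i i' with hlt | rfl | hgt
  · exact .inr ⟨2, isRightDyck_of_isDyckLinear h hlt (hlen ▸ hi') hsum⟩
  · exact .inl ⟨2, isLeftDyck_of_sum_take h.1 h.2.1 hi fun j => by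
      have := hsum j; split_ifs at * <;> omega⟩
  · exact .inr ⟨2, isRightDyck_of_isDyckLinear h hgt hi fun j => (add_right_comm ..).trans (hsum j)⟩

/-- Every linear interval of length 2 in the ν-Dyck lattice
`D(ν)` is either a left interval or a right interval. -/
theorem dyck_linear_length_two_left_or_right (ν P Q : List ℕ) (hν : ν ≠ [])
    (h : IsDyckLinear ν P Q 2) :
    (∃ ℓ, IsLeftDyck ν P Q ℓ) ∨ ∃ ℓ, IsRightDyck ν P Q ℓ :=
  dyck_linear_length_two_left_or_right_general ν P Q h
end

section
/- Let ν be a lattice path. In the ν-Dyck lattice D(ν), every left interval obtained by replacing a subword E^ℓ N by N E^ℓ, and every right interval obtained by replacing a subword E N^ℓ by N^ℓ E, is a linear interval of length ℓ. Conversely, every nontrivial linear interval in D(ν) is either a left interval or a right interval. -/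
/-!
A list is determined by its length and its prefix sums, and the ν-paths of an interval
`[P, Q]` of `D(ν)` correspond, reversing the order, to the monotone functions squeezed between
the prefix sums `G` of `Q` and `F` of `P`. For a left or a right interval these functions form
a one-parameter family, so the interval is a chain.

Conversely, suppose the monotone functions between `G` and `F` form a chain. Lowering `F` by one
at a point where it strictly increases, or raising `G` by one at a point after which it strictly
increases, gives such functions, and two of them at different points are incomparable. So inside
the support `{t | G t < F t}` the function `F` increases only at its left end `a` and `G` only
at its right end `b`: the support is the window `[a, b]`, on which `F - G` is a constant `d`.
If `a < b`, lowering `F` to `G` at `a` and lowering `F` by one on all of `[a, b]` are comparable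
only if `d = 1`. So `P` and `Q` form a left interval (`a = b`) or a right interval (`d = 1`).
-/

namespace DyckLattice

open Set Function

def prefixSum (P : List ℕ) (t : ℕ) : ℕ := (P.take t).sum

theorem dyckLE_iff {P Q : List ℕ} : dyckLE P Q ↔ prefixSum Q ≤ prefixSum P := Iff.rfl

theorem dyckLE_trans {P Q R : List ℕ} (h₁ : dyckLE P Q) (h₂ : dyckLE Q R) : dyckLE P R :=
  fun t => (h₂ t).trans (h₁ t)

theorem prefixSum_zero (P : List ℕ) : prefixSum P 0 = 0 := rfl

theorem prefixSum_succ (P : List ℕ) (t : ℕ) :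
    prefixSum P (t + 1) = prefixSum P t + P.getD t 0 := by
  simp only [prefixSum, List.take_add_one, List.sum_append, List.getD_eq_getElem?_getD]
  cases P[t]? <;> simp

theorem prefixSum_monotone (P : List ℕ) : Monotone (prefixSum P) :=
  monotone_nat_of_le_succ fun t => by rw [prefixSum_succ]; omega

theorem prefixSum_of_length_le {P : List ℕ} {t : ℕ} (h : P.length ≤ t) :
    prefixSum P t = P.sum := by
  rw [prefixSum, List.take_of_length_le h]

theorem eq_of_prefixSum_eq {P Q : List ℕ} (hlen : P.length = Q.length)
    (h : prefixSum P = prefixSum Q) : P = Q := by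
  refine List.ext_getElem hlen fun t hP hQ => ?_
  have hPt := prefixSum_succ P t
  have hQt := prefixSum_succ Q t
  rw [List.getD_eq_getElem _ _ hP] at hPt
  rw [List.getD_eq_getElem _ _ hQ] at hQt
  rw [h] at hPt
  omega

theorem getD_set_of_ne {l : List ℕ} {n t : ℕ} (h : n ≠ t) (a : ℕ) :
    (l.set n a).getD t 0 = l.getD t 0 := by
  simp [List.getD_eq_getElem?_getD, List.getElem?_set_ne h]

theorem prefixSum_set {l : List ℕ} {n : ℕ} (hn : n < l.length) (a t : ℕ) :
    prefixSum (l.set n a) t + (if n < t then l.getD n 0 else 0) =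
      prefixSum l t + (if n < t then a else 0) := by
  induction t with
  | zero => simp [prefixSum_zero]
  | succ t ih =>
    rw [prefixSum_succ, prefixSum_succ]
    rcases eq_or_ne n t with rfl | hnt
    · simp [List.getD_eq_getElem?_getD, hn] at ih ⊢
      omega
    · rw [getD_set_of_ne hnt]
      split_ifs at ih ⊢ <;> omega

def lowerOn (F : ℕ → ℕ) (i j k t : ℕ) : ℕ := F t - if i < t ∧ t ≤ j then k else 0

theorem lowerOn_of_mem {F : ℕ → ℕ} {i j k t : ℕ} (h : i < t ∧ t ≤ j) :
    lowerOn F i j k t = F t - k := by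
  rw [lowerOn, if_pos h]

theorem lowerOn_of_not_mem {F : ℕ → ℕ} {i j k t : ℕ} (h : ¬(i < t ∧ t ≤ j)) :
    lowerOn F i j k t = F t := by
  rw [lowerOn, if_neg h, Nat.sub_zero]

theorem lowerOn_zero (F : ℕ → ℕ) (i j : ℕ) : lowerOn F i j 0 = F := by
  funext t
  simp [lowerOn]

theorem lowerOn_of_le (F : ℕ → ℕ) {i j : ℕ} (h : j ≤ i) (k : ℕ) : lowerOn F i j k = F := by
  funext t
  simp only [lowerOn]
  split_ifs <;> omega

theorem lowerOn_le (F : ℕ → ℕ) (i j k : ℕ) : lowerOn F i j k ≤ F :=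
  fun _ => Nat.sub_le _ _

theorem lowerOn_monotone {F : ℕ → ℕ} (hF : Monotone F) {i j k : ℕ} (h : F i + k ≤ F (i + 1)) :
    Monotone (lowerOn F i j k) := by
  refine monotone_nat_of_le_succ fun t => ?_
  have hFt : F t ≤ F (t + 1) := hF t.le_succ
  rcases eq_or_ne t i with rfl | hti <;>
  · simp only [lowerOn]
    split_ifs <;> omega

-- `IsLeftDyck` and `IsRightDyck` say `Q = moveEast P i (i + 1) ℓ` and `Q = moveEast P i (i + ℓ) 1`.
def moveEast (P : List ℕ) (i j k : ℕ) : List ℕ :=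
  (P.set i (P.getD i 0 - k)).set j (P.getD j 0 + k)

theorem length_moveEast (P : List ℕ) (i j k : ℕ) : (moveEast P i j k).length = P.length := by
  simp [moveEast]

theorem prefixSum_moveEast {P : List ℕ} {i j k : ℕ} (hij : i < j) (hj : j < P.length)
    (hk : k ≤ P.getD i 0) : prefixSum (moveEast P i j k) = lowerOn (prefixSum P) i j k := by
  funext t
  have hj' := prefixSum_set (l := P.set i (P.getD i 0 - k)) (n := j) (by simpa using hj)
    (P.getD j 0 + k) t
  have hi' := prefixSum_set (l := P) (n := i) (by omega) (P.getD i 0 - k) t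
  rw [getD_set_of_ne hij.ne] at hj'
  simp only [moveEast, lowerOn]
  split_ifs at hj' hi' ⊢ <;> omega

def ofPrefixSum (f : ℕ → ℕ) (n : ℕ) : List ℕ := (List.range n).map fun t => f (t + 1) - f t

theorem prefixSum_ofPrefixSum {f : ℕ → ℕ} (hf : Monotone f) (h0 : f 0 = 0) (n t : ℕ) :
    prefixSum (ofPrefixSum f n) t = f (min t n) := by
  induction t with
  | zero => simp [prefixSum_zero, h0]
  | succ t ih =>
    have hft : f t ≤ f (t + 1) := hf t.le_succ
    rw [prefixSum_succ, ih]
    rcases lt_or_ge t n with ht | ht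
    · simp [ofPrefixSum, List.getD_eq_getElem?_getD, List.getElem?_range ht,
        min_eq_left ht.le, min_eq_left (Nat.succ_le_of_lt ht)]
      omega
    · simp [ofPrefixSum, List.getD_eq_getElem?_getD, ht,
        min_eq_right (ht.trans t.le_succ)]

def monotoneIcc (G F : ℕ → ℕ) : Set (ℕ → ℕ) := {f | Monotone f} ∩ Icc G F

theorem _root_.IsNuPath.prefixSum_of_length_le {ν P : List ℕ} (hP : IsNuPath ν P) {t : ℕ}
    (ht : ν.length ≤ t) : prefixSum P t = ν.sum := by
  rw [DyckLattice.prefixSum_of_length_le (hP.1 ▸ ht), hP.2.2]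

theorem _root_.IsNuPath.eq_of_prefixSum_eq {ν P Q : List ℕ} (hP : IsNuPath ν P) (hQ : IsNuPath ν Q)
    (h : prefixSum P = prefixSum Q) : P = Q :=
  DyckLattice.eq_of_prefixSum_eq (hP.1.trans hQ.1.symm) h

theorem prefixSum_mem_monotoneIcc {P Q R : List ℕ} (hPR : dyckLE P R) (hRQ : dyckLE R Q) :
    prefixSum R ∈ monotoneIcc (prefixSum Q) (prefixSum P) :=
  ⟨prefixSum_monotone R, hRQ, hPR⟩

theorem isNuPath_ofPrefixSum {ν P Q : List ℕ} (hP : IsNuPath ν P) (hQ : IsNuPath ν Q)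
    {f : ℕ → ℕ} (hf : f ∈ monotoneIcc (prefixSum Q) (prefixSum P)) :
    IsNuPath ν (ofPrefixSum f ν.length) ∧ prefixSum (ofPrefixSum f ν.length) = f := by
  obtain ⟨hmono, hQf, hfP⟩ := hf
  have hlen : (ofPrefixSum f ν.length).length = ν.length := by simp [ofPrefixSum]
  have htail : ∀ t, ν.length ≤ t → f t = ν.sum := fun t ht =>
    le_antisymm ((hfP t).trans (hP.prefixSum_of_length_le ht).le)
      ((hQ.prefixSum_of_length_le ht).symm.le.trans (hQf t))
  have hR : prefixSum (ofPrefixSum f ν.length) = f := by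
    funext t
    rw [prefixSum_ofPrefixSum hmono (Nat.eq_zero_of_le_zero (hfP 0))]
    rcases le_total t ν.length with ht | ht
    · rw [min_eq_left ht]
    · rw [min_eq_right ht, htail _ le_rfl, htail _ ht]
  refine ⟨⟨hlen, fun t => ?_, ?_⟩, hR⟩
  · change prefixSum _ t ≤ prefixSum ν t
    rw [hR]
    exact (hfP t).trans (hP.2.1 t)
  · rw [← DyckLattice.prefixSum_of_length_le hlen.le, hR, htail _ le_rfl]

theorem isDyckLinear_of_chain {ν P Q : List ℕ} {ℓ : ℕ} (hP : IsNuPath ν P) (hQ : IsNuPath ν Q)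
    (φ : ℕ → ℕ → ℕ) (h0 : φ 0 = prefixSum P) (hℓ : φ ℓ = prefixSum Q)
    (hmono : ∀ k ≤ ℓ, Monotone (φ k)) (hanti : ∀ a ≤ ℓ, ∀ b ≤ ℓ, φ b ≤ φ a ↔ a ≤ b)
    (hsurj : ∀ f ∈ monotoneIcc (prefixSum Q) (prefixSum P), ∃ k ≤ ℓ, φ k = f) :
    IsDyckLinear ν P Q ℓ := by
  have hmem : ∀ k ≤ ℓ, φ k ∈ monotoneIcc (prefixSum Q) (prefixSum P) := fun k hk =>
    ⟨hmono k hk, hℓ ▸ (hanti k hk ℓ le_rfl).2 hk,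
      h0 ▸ (hanti 0 (Nat.zero_le ℓ) k hk).2 (Nat.zero_le k)⟩
  set c : ℕ → List ℕ := fun k => ofPrefixSum (φ k) ν.length
  have hc : ∀ k ≤ ℓ, IsNuPath ν (c k) ∧ prefixSum (c k) = φ k := fun k hk =>
    isNuPath_ofPrefixSum hP hQ (hmem k hk)
  have hcle : ∀ a ≤ ℓ, ∀ b ≤ ℓ, dyckLE (c a) (c b) ↔ a ≤ b := fun a ha b hb => by
    rw [dyckLE_iff, (hc a ha).2, (hc b hb).2, hanti a ha b hb]
  have hindex : ∀ R, IsNuPath ν R → dyckLE P R → dyckLE R Q → ∃ k ≤ ℓ, R = c k := by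
    intro R hR hPR hRQ
    obtain ⟨k, hk, hkR⟩ := hsurj _ (prefixSum_mem_monotoneIcc hPR hRQ)
    exact ⟨k, hk, hR.eq_of_prefixSum_eq (hc k hk).1 (hkR.symm.trans (hc k hk).2.symm)⟩
  have hc0 : c 0 = P :=
    (hc 0 (Nat.zero_le ℓ)).1.eq_of_prefixSum_eq hP ((hc 0 (Nat.zero_le ℓ)).2.trans h0)
  have hcℓ : c ℓ = Q := (hc ℓ le_rfl).1.eq_of_prefixSum_eq hQ ((hc ℓ le_rfl).2.trans hℓ)
  refine ⟨hP, hQ, hc0 ▸ hcℓ ▸ (hcle 0 (Nat.zero_le ℓ) ℓ le_rfl).2 (Nat.zero_le ℓ), ?_,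
    c, hc0, hcℓ, ?_⟩
  · intro R S hR hS hPR hRQ hPS hSQ
    obtain ⟨a, ha, rfl⟩ := hindex R hR hPR hRQ
    obtain ⟨b, hb, rfl⟩ := hindex S hS hPS hSQ
    rw [hcle a ha b hb, hcle b hb a ha]
    exact le_total a b
  · intro k hk
    refine ⟨(hc k hk.le).1, (hc (k + 1) hk).1, (hcle k hk.le (k + 1) hk).2 k.le_succ,
      fun h => by simpa using (hcle (k + 1) hk k hk.le).1 (h ▸ fun _ => le_rfl), ?_⟩
    intro R hR hkR hRk
    obtain ⟨m, hm, rfl⟩ := hindex R hR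
      (hc0 ▸ dyckLE_trans ((hcle 0 (Nat.zero_le ℓ) k hk.le).2 (Nat.zero_le k)) hkR)
      (hcℓ ▸ dyckLE_trans hRk ((hcle (k + 1) hk ℓ le_rfl).2 hk))
    rw [hcle k hk.le m hm] at hkR
    rw [hcle m hm (k + 1) hk] at hRk
    obtain rfl | rfl : m = k ∨ m = k + 1 := by omega
    exacts [Or.inl rfl, Or.inr rfl]

theorem lowerOn_succ_le_iff {F : ℕ → ℕ} {i a b : ℕ} (ha : a ≤ F (i + 1)) (hb : b ≤ F (i + 1)) :
    lowerOn F i (i + 1) b ≤ lowerOn F i (i + 1) a ↔ a ≤ b := by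
  refine ⟨fun h => ?_, fun hab t => ?_⟩
  · have hi : lowerOn F i (i + 1) b (i + 1) ≤ lowerOn F i (i + 1) a (i + 1) := h (i + 1)
    rw [lowerOn_of_mem ⟨Nat.lt_add_one i, le_rfl⟩, lowerOn_of_mem ⟨Nat.lt_add_one i, le_rfl⟩] at hi
    omega
  · simp only [lowerOn]
    split_ifs <;> omega

theorem exists_lowerOn_succ_eq {F f : ℕ → ℕ} {i ℓ : ℕ} (hf : f ∈ Icc (lowerOn F i (i + 1) ℓ) F) :
    ∃ k ≤ ℓ, lowerOn F i (i + 1) k = f := by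
  have hwin : i < i + 1 ∧ i + 1 ≤ i + 1 := ⟨Nat.lt_add_one i, le_rfl⟩
  have hlo : F (i + 1) - ℓ ≤ f (i + 1) := by simpa only [lowerOn_of_mem hwin] using hf.1 (i + 1)
  have hhi : f (i + 1) ≤ F (i + 1) := hf.2 (i + 1)
  refine ⟨F (i + 1) - f (i + 1), by omega, funext fun t => ?_⟩
  rcases eq_or_ne t (i + 1) with rfl | ht
  · rw [lowerOn_of_mem hwin]
    omega
  · have hout : ¬(i < t ∧ t ≤ i + 1) := by omega
    have h₁ : F t ≤ f t := by simpa only [lowerOn_of_not_mem hout] using hf.1 t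
    rw [lowerOn_of_not_mem hout]
    exact le_antisymm h₁ (hf.2 t)

theorem lowerOn_add_le_iff {F : ℕ → ℕ} (hF : Monotone F) {i a b : ℕ} (hpos : 0 < F (i + 1)) :
    lowerOn F i (i + b) 1 ≤ lowerOn F i (i + a) 1 ↔ a ≤ b := by
  refine ⟨fun h => ?_, fun hab t => ?_⟩
  · by_contra hba
    have hia : lowerOn F i (i + b) 1 (i + a) ≤ lowerOn F i (i + a) 1 (i + a) := h (i + a)
    have : F (i + 1) ≤ F (i + a) := hF (by omega)
    rw [lowerOn_of_not_mem (by omega), lowerOn_of_mem (by omega)] at hia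
    omega
  · simp only [lowerOn]
    split_ifs <;> omega

theorem exists_lowerOn_add_eq {F f : ℕ → ℕ} {i ℓ : ℕ}
    (hflat : ∀ t, i + 1 ≤ t → t ≤ i + ℓ → F t = F (i + 1))
    (hf : f ∈ monotoneIcc (lowerOn F i (i + ℓ) 1) F) : ∃ k ≤ ℓ, lowerOn F i (i + k) 1 = f := by
  classical
  obtain ⟨hmono, hlo, hhi⟩ := hf
  set k := Nat.findGreatest (fun k => f (i + k) < F (i + k)) ℓ with hk
  have hkℓ : k ≤ ℓ := Nat.findGreatest_le ℓ
  refine ⟨k, hkℓ, funext fun t => ?_⟩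
  have h₂ : f t ≤ F t := hhi t
  by_cases hwin : i < t ∧ t ≤ i + k
  · have hlt : f (i + k) < F (i + k) :=
      Nat.findGreatest_of_ne_zero (P := fun k => f (i + k) < F (i + k)) hk.symm
        (show k ≠ 0 by omega)
    have : f t ≤ f (i + k) := hmono hwin.2
    have := hflat t (by omega) (by omega)
    have := hflat (i + k) (by omega) (by omega)
    have h₁ : F t - 1 ≤ f t := by
      simpa only [lowerOn_of_mem (j := i + ℓ) ⟨hwin.1, by omega⟩] using hlo t
    rw [lowerOn_of_mem hwin]
    omega
  · rw [lowerOn_of_not_mem hwin]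
    by_cases hwinℓ : i < t ∧ t ≤ i + ℓ
    · have := Nat.findGreatest_is_greatest (show k < t - i by omega) (show t - i ≤ ℓ by omega)
      rw [Nat.add_sub_cancel' hwinℓ.1.le] at this
      omega
    · have h₁ : F t ≤ f t := by simpa only [lowerOn_of_not_mem hwinℓ] using hlo t
      omega

theorem _root_.IsLeftDyck.isDyckLinear {ν P Q : List ℕ} {ℓ : ℕ} (h : IsLeftDyck ν P Q ℓ) :
    IsDyckLinear ν P Q ℓ := by
  obtain ⟨hP, hQ, -, i, hi, hℓ, rfl⟩ := h
  have hgap : prefixSum P i + ℓ ≤ prefixSum P (i + 1) := by rw [prefixSum_succ]; omega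
  have hQ' : prefixSum (moveEast P i (i + 1) ℓ) = lowerOn (prefixSum P) i (i + 1) ℓ :=
    prefixSum_moveEast (Nat.lt_add_one i) hi hℓ
  exact isDyckLinear_of_chain hP hQ (fun k => lowerOn (prefixSum P) i (i + 1) k)
    (lowerOn_zero _ _ _) hQ'.symm
    (fun k hk => lowerOn_monotone (prefixSum_monotone P) (by omega))
    (fun a ha b hb => lowerOn_succ_le_iff (by omega) (by omega))
    (fun f hf => exists_lowerOn_succ_eq (hQ' ▸ hf.2))

theorem _root_.IsRightDyck.isDyckLinear {ν P Q : List ℕ} {ℓ : ℕ} (h : IsRightDyck ν P Q ℓ) :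
    IsDyckLinear ν P Q ℓ := by
  obtain ⟨hP, hQ, hℓ, i, hi, hPi, hzero, rfl⟩ := h
  have hgap : prefixSum P i + 1 ≤ prefixSum P (i + 1) := by rw [prefixSum_succ]; omega
  have hflat : ∀ t, i + 1 ≤ t → t ≤ i + ℓ → prefixSum P t = prefixSum P (i + 1) := by
    intro t hit
    induction t, hit using Nat.le_induction with
    | base => exact fun _ => rfl
    | succ t hit ih =>
      intro htℓ
      rw [prefixSum_succ, hzero t (by omega) (by omega), ih (by omega), add_zero]
  have hQ' : prefixSum (moveEast P i (i + ℓ) 1) = lowerOn (prefixSum P) i (i + ℓ) 1 :=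
    prefixSum_moveEast (by omega) hi hPi
  exact isDyckLinear_of_chain hP hQ (fun k => lowerOn (prefixSum P) i (i + k) 1)
    (lowerOn_of_le _ le_rfl _) hQ'.symm
    (fun _ _ => lowerOn_monotone (prefixSum_monotone P) hgap)
    (fun _ _ _ _ => lowerOn_add_le_iff (prefixSum_monotone P) (by omega))
    (fun f hf => exists_lowerOn_add_eq hflat (hQ' ▸ hf))


theorem update_mem_monotoneIcc {G F f : ℕ → ℕ} (hf : f ∈ monotoneIcc G F) {j v : ℕ}
    (h₁ : f (j - 1) ≤ v) (h₂ : v ≤ f (j + 1)) (hG : G j ≤ v) (hF : v ≤ F j) :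
    update f j v ∈ monotoneIcc G F := by
  obtain ⟨hmono, hGf, hfF⟩ := hf
  refine ⟨monotone_nat_of_le_succ fun t => ?_, fun t => ?_, fun t => ?_⟩
  · have : f t ≤ f (t + 1) := hmono t.le_succ
    rcases eq_or_ne t j with rfl | htj
    · rw [update_self, update_of_ne (by omega)]
      exact h₂
    rcases eq_or_ne (t + 1) j with rfl | htj'
    · rw [update_self, update_of_ne htj]
      simpa using h₁
    · rw [update_of_ne htj, update_of_ne htj']
      exact this
  · rcases eq_or_ne t j with rfl | htj
    · rw [update_self]
      exact hG
    · rw [update_of_ne htj]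
      exact hGf t
  · rcases eq_or_ne t j with rfl | htj
    · rw [update_self]
      exact hF
    · rw [update_of_ne htj]
      exact hfF t

section Converse

variable {G F : ℕ → ℕ}

/-- Lowering `F` by one at two different points where it increases gives incomparable
functions. -/
theorem eq_of_descents (hS : IsChain (· ≤ ·) (monotoneIcc G F)) (hF : Monotone F) (hGF : G ≤ F)
    {a b : ℕ} (ha : G a < F a) (ha' : F (a - 1) < F a) (hb : G b < F b)
    (hb' : F (b - 1) < F b) : a = b := by
  have hdip : ∀ j, G j < F j → F (j - 1) < F j → update F j (F j - 1) ∈ monotoneIcc G F :=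
    fun j h h' => update_mem_monotoneIcc ⟨hF, hGF, le_rfl⟩ (by omega)
      ((Nat.sub_le _ _).trans (hF j.le_succ)) (by omega) (Nat.sub_le _ _)
  by_contra hab
  rcases hS.total (hdip a ha ha') (hdip b hb hb') with h | h
  · have hb'' : update F a (F a - 1) b ≤ update F b (F b - 1) b := h b
    rw [update_of_ne (Ne.symm hab), update_self] at hb''
    omega
  · have ha'' : update F b (F b - 1) a ≤ update F a (F a - 1) a := h a
    rw [update_of_ne hab, update_self] at ha''
    omega

/-- Raising `G` by one at two different points after which it increases gives incomparable
functions. -/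
theorem eq_of_ascents (hS : IsChain (· ≤ ·) (monotoneIcc G F)) (hG : Monotone G) (hGF : G ≤ F)
    {a b : ℕ} (ha : G a < F a) (ha' : G a < G (a + 1)) (hb : G b < F b)
    (hb' : G b < G (b + 1)) : a = b := by
  have hbump : ∀ j, G j < F j → G j < G (j + 1) → update G j (G j + 1) ∈ monotoneIcc G F :=
    fun j h h' => update_mem_monotoneIcc ⟨hG, le_rfl, hGF⟩
      ((hG (Nat.sub_le j 1)).trans (Nat.le_succ _)) h' (Nat.le_succ _) h
  by_contra hab
  rcases hS.total (hbump a ha ha') (hbump b hb hb') with h | h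
  · have ha'' : update G a (G a + 1) a ≤ update G b (G b + 1) a := h a
    rw [update_self, update_of_ne hab] at ha''
    omega
  · have hb'' : update G b (G b + 1) b ≤ update G a (G a + 1) b := h b
    rw [update_self, update_of_ne (Ne.symm hab)] at hb''
    omega

theorem lt_and_eq_on_Icc_of_isChain (hS : IsChain (· ≤ ·) (monotoneIcc G F)) (hF : Monotone F)
    (hG : Monotone G) (hGF : G ≤ F) {a b : ℕ} (ha : G a < F a) (ha' : F (a - 1) < F a)
    (hb : G b < F b) (hb' : G b < G (b + 1)) :
    ∀ t, a ≤ t → t ≤ b → G t < F t ∧ F t = F a ∧ G t = G a := by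
  intro t hat
  induction t, hat using Nat.le_induction with
  | base => exact fun _ => ⟨ha, rfl, rfl⟩
  | succ t hat ih =>
    intro htb
    obtain ⟨ht, hFt, hGt⟩ := ih (by omega)
    have hGsucc : G (t + 1) = G t := by
      refine le_antisymm (not_lt.1 fun hlt => ?_) (hG t.le_succ)
      have := eq_of_ascents hS hG hGF ht hlt hb hb'
      omega
    have hFle : F t ≤ F (t + 1) := hF t.le_succ
    have hlt : G (t + 1) < F (t + 1) := by omega
    have hFsucc : F (t + 1) = F t := by
      refine le_antisymm (not_lt.1 fun hlt' => ?_) hFle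
      have := eq_of_descents hS hF hGF hlt (by rwa [Nat.add_sub_cancel]) ha ha'
      omega
    exact ⟨hlt, hFsucc.trans hFt, hGsucc.trans hGt⟩

/-- On a window `[a, b]` with `a < b`, lowering `F` to `G` at `a` and lowering `F` by one on the
whole window are comparable only if `F a - G a = 1`. -/
theorem eq_add_one_of_isChain (hS : IsChain (· ≤ ·) (monotoneIcc G F)) (hF : Monotone F)
    (hGF : G ≤ F) {a b : ℕ} (hab : a < b) (ha : F (a - 1) ≤ G a)
    (hwin : ∀ t, a ≤ t → t ≤ b → G t < F t) : F a = G a + 1 := by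
  have hGa := hwin a le_rfl hab.le
  have ha0 : 0 < a := by
    rcases Nat.eq_zero_or_pos a with rfl | h
    · simp only [Nat.zero_sub] at ha
      omega
    · exact h
  have hf : update F a (G a) ∈ monotoneIcc G F :=
    update_mem_monotoneIcc ⟨hF, hGF, le_rfl⟩ ha (hGa.le.trans (hF a.le_succ)) le_rfl hGa.le
  have hg : lowerOn F (a - 1) b 1 ∈ monotoneIcc G F := by
    refine ⟨lowerOn_monotone hF (by rw [Nat.sub_add_cancel ha0]; omega),
      fun t => show G t ≤ lowerOn F (a - 1) b 1 t from ?_, lowerOn_le F _ _ _⟩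
    by_cases h : a - 1 < t ∧ t ≤ b
    · have := hwin t (by omega) h.2
      rw [lowerOn_of_mem h]
      omega
    · rw [lowerOn_of_not_mem h]
      exact hGF t
  rcases hS.total hf hg with h | h
  · have hb : update F a (G a) b ≤ lowerOn F (a - 1) b 1 b := h b
    rw [update_of_ne hab.ne', lowerOn_of_mem ⟨by omega, le_rfl⟩] at hb
    have := hwin b hab.le le_rfl
    omega
  · have ha' : lowerOn F (a - 1) b 1 a ≤ update F a (G a) a := h a
    rw [update_self, lowerOn_of_mem ⟨by omega, hab.le⟩] at ha'
    omega

theorem exists_eq_lowerOn_of_isChain (hS : IsChain (· ≤ ·) (monotoneIcc G F)) (hF : Monotone F)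
    (hG : Monotone G) (hGF : G ≤ F) (h0 : G 0 = F 0) {n : ℕ} (hn : ∀ t, n ≤ t → G t = F t)
    (hne : G ≠ F) :
    ∃ i j d, i < j ∧ j < n ∧ F i + d ≤ F (i + 1) ∧ 0 < d ∧ G = lowerOn F i j d ∧
      (j = i + 1 ∨ d = 1 ∧ ∀ t, i < t → t < j → F (t + 1) = F t) := by
  classical
  have hex : ∃ t, G t < F t := by
    by_contra h
    push Not at h
    exact hne (le_antisymm hGF h)
  have hsupp : ∀ t, G t < F t → 0 < t ∧ t < n := fun t ht =>
    ⟨Nat.pos_of_ne_zero (by rintro rfl; omega), not_le.1 fun h => by have := hn t h; omega⟩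
  set a := Nat.find hex
  set b := Nat.findGreatest (fun t => G t < F t) n
  have ha : G a < F a := Nat.find_spec hex
  have hab : a ≤ b := Nat.le_findGreatest (hsupp a ha).2.le ha
  have hb : G b < F b :=
    Nat.findGreatest_spec (P := fun t => G t < F t) (hsupp a ha).2.le ha
  have ha0 := (hsupp a ha).1
  have hbelow : ∀ t < a, G t = F t := fun t ht =>
    le_antisymm (hGF t) (not_lt.1 (Nat.find_min hex ht))
  have habove : ∀ t, b < t → G t = F t := fun t ht => by
    rcases le_or_gt n t with h | h
    · exact hn t h
    · exact le_antisymm (hGF t) (not_lt.1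
        (Nat.findGreatest_is_greatest (P := fun t => G t < F t) ht h.le))
  have hFa : F (a - 1) ≤ G a := (hbelow (a - 1) (by omega)).symm.le.trans (hG (Nat.sub_le a 1))
  have hGb : G b < G (b + 1) := by
    have := habove (b + 1) (by omega)
    have : F b ≤ F (b + 1) := hF b.le_succ
    omega
  have hwin := lt_and_eq_on_Icc_of_isChain hS hF hG hGF ha (by omega) hb hGb
  refine ⟨a - 1, b, F a - G a, by omega, (hsupp b hb).2, ?_, by omega, funext fun t => ?_, ?_⟩
  · rw [Nat.sub_add_cancel ha0]
    omega
  · by_cases h : a - 1 < t ∧ t ≤ b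
    · obtain ⟨-, hFt, hGt⟩ := hwin t (by omega) h.2
      rw [lowerOn_of_mem h]
      omega
    · rw [lowerOn_of_not_mem h]
      rcases (show t < a ∨ b < t by omega) with ht | ht
      exacts [hbelow t ht, habove t ht]
  · rcases hab.eq_or_lt with h | h
    · exact Or.inl (by omega)
    · refine Or.inr ⟨?_, fun t h₁ h₂ => ?_⟩
      · have := eq_add_one_of_isChain hS hF hGF h hFa fun t h₁ h₂ => (hwin t h₁ h₂).1
        omega
      · rw [(hwin (t + 1) (by omega) (by omega)).2.1, (hwin t (by omega) (by omega)).2.1]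

end Converse

theorem _root_.IsDyckLinear.isChain {ν P Q : List ℕ} {ℓ : ℕ} (h : IsDyckLinear ν P Q ℓ) :
    IsChain (· ≤ ·) (monotoneIcc (prefixSum Q) (prefixSum P)) := by
  obtain ⟨hP, hQ, -, hlin, -⟩ := h
  intro f hf g hg _
  obtain ⟨hR, hRf⟩ := isNuPath_ofPrefixSum hP hQ hf
  obtain ⟨hS, hSg⟩ := isNuPath_ofPrefixSum hP hQ hg
  have := hlin _ _ hR hS
  simp only [dyckLE_iff, hRf, hSg] at this
  exact (this hf.2.2 hf.2.1 hg.2.2 hg.2.1).symm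

theorem _root_.IsDyckLinear.ne {ν P Q : List ℕ} {ℓ : ℕ} (h : IsDyckLinear ν P Q ℓ)
    (hℓ : 0 < ℓ) : P ≠ Q := by
  obtain ⟨hP, -, -, -, c, rfl, rfl, hcov⟩ := h
  have hchain : ∀ k, 1 ≤ k → k ≤ ℓ → dyckLE (c 1) (c k) := by
    intro k hk
    induction k, hk using Nat.le_induction with
    | base => exact fun _ _ => le_rfl
    | succ k hk ih => exact fun hkℓ => dyckLE_trans (ih (by omega)) (hcov k (by omega)).2.2.1
  intro heq
  obtain ⟨-, hc1, h01, hne, -⟩ := hcov 0 hℓ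
  refine hne (hc1.eq_of_prefixSum_eq hP (le_antisymm (dyckLE_iff.1 h01) ?_)).symm
  exact dyckLE_iff.1 (heq ▸ hchain ℓ hℓ le_rfl)

theorem isLeftDyck_of_prefixSum_eq {ν P Q : List ℕ} (hP : IsNuPath ν P) (hQ : IsNuPath ν Q)
    {i d : ℕ} (hi : i + 1 < P.length) (hd : 0 < d)
    (hgap : prefixSum P i + d ≤ prefixSum P (i + 1))
    (hQP : prefixSum Q = lowerOn (prefixSum P) i (i + 1) d) : IsLeftDyck ν P Q d := by
  have hdi : d ≤ P.getD i 0 := by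
    rw [prefixSum_succ] at hgap
    omega
  exact ⟨hP, hQ, hd, i, hi, hdi,
    eq_of_prefixSum_eq ((hQ.1.trans hP.1.symm).trans (length_moveEast P i (i + 1) d).symm)
    (hQP.trans (prefixSum_moveEast (Nat.lt_add_one i) hi hdi).symm)⟩

theorem isRightDyck_of_prefixSum_eq {ν P Q : List ℕ} (hP : IsNuPath ν P) (hQ : IsNuPath ν Q)
    {i j : ℕ} (hij : i < j) (hj : j < P.length) (hgap : prefixSum P i < prefixSum P (i + 1))
    (hflat : ∀ t, i < t → t < j → prefixSum P (t + 1) = prefixSum P t)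
    (hQP : prefixSum Q = lowerOn (prefixSum P) i j 1) : IsRightDyck ν P Q (j - i) := by
  have hPi : 1 ≤ P.getD i 0 := by
    rw [prefixSum_succ] at hgap
    omega
  refine ⟨hP, hQ, by omega, i, by omega, hPi, fun t h₁ h₂ => ?_, ?_⟩
  · have := hflat t h₁ (by omega)
    rw [prefixSum_succ] at this
    omega
  · rw [Nat.add_sub_cancel' hij.le]
    exact eq_of_prefixSum_eq ((hQ.1.trans hP.1.symm).trans (length_moveEast P i j 1).symm)
      (hQP.trans (prefixSum_moveEast hij hj hPi).symm)

end DyckLattice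

open DyckLattice in
theorem dyck_left_right_are_linear_and_conversely_general (ν : List ℕ) :
    (∀ P Q ℓ, IsLeftDyck ν P Q ℓ → IsDyckLinear ν P Q ℓ) ∧
    (∀ P Q ℓ, IsRightDyck ν P Q ℓ → IsDyckLinear ν P Q ℓ) ∧
    (∀ P Q ℓ, 1 ≤ ℓ → IsDyckLinear ν P Q ℓ →
      (∃ k, IsLeftDyck ν P Q k) ∨ ∃ k, IsRightDyck ν P Q k) := by
  refine ⟨fun P Q ℓ h => h.isDyckLinear, fun P Q ℓ h => h.isDyckLinear, fun P Q ℓ hℓ h => ?_⟩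
  have hchain := h.isChain
  have hne := h.ne hℓ
  obtain ⟨hP, hQ, hPQ, -, -⟩ := h
  have htail : ∀ t, P.length ≤ t → prefixSum Q t = prefixSum P t := fun t ht => by
    rw [hQ.prefixSum_of_length_le (hP.1 ▸ ht), hP.prefixSum_of_length_le (hP.1 ▸ ht)]
  obtain ⟨i, j, d, hij, hj, hgap, hd, hQP, hshape⟩ :=
    exists_eq_lowerOn_of_isChain hchain (prefixSum_monotone P) (prefixSum_monotone Q) hPQ
      rfl htail fun hPQ' => hne (hP.eq_of_prefixSum_eq hQ hPQ'.symm)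
  rcases hshape with rfl | ⟨rfl, hflat⟩
  · exact Or.inl ⟨d, isLeftDyck_of_prefixSum_eq hP hQ hj hd hgap hQP⟩
  · exact Or.inr ⟨j - i, isRightDyck_of_prefixSum_eq hP hQ hij hj hgap hflat hQP⟩

/-- In the ν-Dyck lattice, every left interval and every right
interval of parameter `ℓ` is a linear interval of length `ℓ`, and conversely
every nontrivial linear interval is either a left interval or a right interval. -/
theorem dyck_left_right_are_linear_and_conversely (ν : List ℕ) (hν : ν ≠ []) :
    (∀ P Q ℓ, IsLeftDyck ν P Q ℓ → IsDyckLinear ν P Q ℓ) ∧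
    (∀ P Q ℓ, IsRightDyck ν P Q ℓ → IsDyckLinear ν P Q ℓ) ∧
    (∀ P Q ℓ, 1 ≤ ℓ → IsDyckLinear ν P Q ℓ →
      (∃ k, IsLeftDyck ν P Q k) ∨ ∃ k, IsRightDyck ν P Q k) :=
  dyck_left_right_are_linear_and_conversely_general ν
end

section
/- Let ν be a lattice path and ℓ ≥ 1. The number of left intervals of length ℓ in the ν-Dyck lattice D(ν) equals the number of pairs (P, s) where P is a ν-path and s is a north step of P immediately preceded by at least ℓ consecutive east steps; the number of right intervals of length ℓ in D(ν) equals the number of pairs (P, s) where P is a ν-path and s is an east step of P immediately followed by at least ℓ consecutive north steps. -/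
/-!
A left interval `E^ℓ N ↦ N E^ℓ` and a right interval `E N^ℓ ↦ N^ℓ E` both move a block of
east steps of the bottom path `P` past some north steps to a later block. The top path is
therefore determined by `P` together with the north step, resp. the east step, that is marked;
conversely every such marking yields a ν-path again, since moving east steps later only lowers
the prefix sums. The marked block is recovered from the top path as the first block that
changed, so both correspondences are bijections.
-/

namespace List

theorem sum_take_eq_sum_range_getD {M : Type*} [AddCommMonoid M] :
    ∀ (L : List M) (j : ℕ), (L.take j).sum = ∑ t ∈ Finset.range j, L.getD t 0
  | _, 0 => by simp
  | [], j => by simp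
  | a :: L, j + 1 => by
      rw [Finset.sum_range_succ', take_succ_cons, sum_cons, sum_take_eq_sum_range_getD L j]
      simp [add_comm]

theorem getD_set_of_ne {α : Type*} (L : List α) {i t : ℕ} (b d : α) (h : t ≠ i) :
    (L.set i b).getD t d = L.getD t d := by
  simp [getD_eq_getElem?_getD, Ne.symm h]

theorem getD_set_self {α : Type*} {L : List α} {i : ℕ} (b d : α) (h : i < L.length) :
    (L.set i b).getD i d = b := by
  simp [getD_eq_getElem?_getD, h]

end List

def moveEastSteps (P : List ℕ) (a i k : ℕ) : List ℕ :=
  (P.set i (P.getD i 0 - a)).set k (P.getD k 0 + a)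

section MoveEastSteps

variable {P : List ℕ} {a i k : ℕ}

@[simp]
theorem length_moveEastSteps : (moveEastSteps P a i k).length = P.length := by
  simp [moveEastSteps]

theorem getD_moveEastSteps (hik : i < k) (hk : k < P.length) (t : ℕ) :
    (moveEastSteps P a i k).getD t 0 =
      if t = k then P.getD k 0 + a else if t = i then P.getD i 0 - a else P.getD t 0 := by
  unfold moveEastSteps
  split_ifs with htk hti
  · subst htk
    exact List.getD_set_self _ _ (by simpa using hk)
  · rw [List.getD_set_of_ne _ _ _ htk, hti, List.getD_set_self _ _ (hik.trans hk)]
  · rw [List.getD_set_of_ne _ _ _ htk, List.getD_set_of_ne _ _ _ hti]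

theorem sum_take_moveEastSteps (hik : i < k) (hk : k < P.length) (ha : a ≤ P.getD i 0)
    (j : ℕ) :
    ((moveEastSteps P a i k).take j).sum + (if i < j ∧ j ≤ k then a else 0) =
      (P.take j).sum := by
  rw [List.sum_take_eq_sum_range_getD, List.sum_take_eq_sum_range_getD]
  induction j with
  | zero => simp
  | succ j ih =>
    rw [Finset.sum_range_succ, Finset.sum_range_succ, getD_moveEastSteps hik hk j]
    rcases eq_or_ne j k with rfl | hjk
    · split_ifs at ih ⊢ <;> omega
    rcases eq_or_ne j i with rfl | hji <;> split_ifs at ih ⊢ <;> omega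

theorem IsNuPath.moveEastSteps {ν : List ℕ} (hP : IsNuPath ν P) (hik : i < k)
    (hk : k < P.length) (ha : a ≤ P.getD i 0) : IsNuPath ν (moveEastSteps P a i k) := by
  obtain ⟨hlen, hbelow, hsum⟩ := hP
  refine ⟨by simpa using hlen, fun j => ?_, ?_⟩
  · have := sum_take_moveEastSteps hik hk ha j
    have := hbelow j
    omega
  · have h := sum_take_moveEastSteps hik hk ha P.length
    rw [if_neg (by omega), add_zero, List.take_length,
      List.take_of_length_le (by simp)] at h
    omega

theorem eq_of_moveEastSteps_eq {a' i' k' : ℕ} (hik : i < k) (hk : k < P.length)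
    (hik' : i' < k') (hk' : k' < P.length) (ha : 0 < a) (haP : a ≤ P.getD i 0)
    (ha' : 0 < a') (haP' : a' ≤ P.getD i' 0)
    (h : moveEastSteps P a i k = moveEastSteps P a' i' k') : i = i' := by
  by_contra hne
  wlog hlt : i < i' generalizing i i' k k' a a'
  · exact this hik' hk' hik hk ha' haP' ha haP h.symm (Ne.symm hne) (by omega)
  have hi := congrArg (·.getD i 0) h
  simp only [getD_moveEastSteps hik hk, getD_moveEastSteps hik' hk'] at hi
  split_ifs at hi <;> omega

theorem ncard_image_moveEastSteps {S : Set (List ℕ × ℕ)} {d : ℕ} (ha : 0 < a) (hd : 0 < d)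
    (hS : ∀ x ∈ S, x.2 + d < x.1.length ∧ a ≤ x.1.getD x.2 0) :
    ((fun x => (x.1, moveEastSteps x.1 a x.2 (x.2 + d))) '' S).ncard = S.ncard := by
  refine Set.InjOn.ncard_image ?_
  rintro ⟨P, i⟩ hx ⟨P', i'⟩ hx' h
  simp only [Prod.mk.injEq] at h ⊢
  obtain ⟨rfl, h⟩ := h
  obtain ⟨hi, haP⟩ := hS _ hx
  obtain ⟨hi', haP'⟩ := hS _ hx'
  exact ⟨rfl, eq_of_moveEastSteps_eq (by omega) hi (by omega) hi' ha haP ha haP' h⟩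

end MoveEastSteps

theorem setOf_isLeftDyck_eq_image {ν : List ℕ} {ℓ : ℕ} (hℓ : 1 ≤ ℓ) :
    {PQ : List ℕ × List ℕ | IsLeftDyck ν PQ.1 PQ.2 ℓ} =
      (fun x => (x.1, moveEastSteps x.1 ℓ x.2 (x.2 + 1))) ''
        {Ps : List ℕ × ℕ | IsNuPath ν Ps.1 ∧ Ps.2 + 1 < Ps.1.length ∧ ℓ ≤ Ps.1.getD Ps.2 0} := by
  ext ⟨P, Q⟩
  constructor
  · rintro ⟨hP, -, -, i, hi, hℓP, hQ⟩
    exact ⟨(P, i), ⟨hP, hi, hℓP⟩, congrArg (Prod.mk P) hQ.symm⟩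
  · rintro ⟨⟨P, i⟩, ⟨hP, hi, hℓP⟩, h⟩
    obtain ⟨rfl, rfl⟩ := Prod.mk.inj h
    exact ⟨hP, hP.moveEastSteps (Nat.lt_succ_self i) hi hℓP, hℓ, i, hi, hℓP, rfl⟩

theorem setOf_isRightDyck_eq_image {ν : List ℕ} {ℓ : ℕ} (hℓ : 1 ≤ ℓ) :
    {PQ : List ℕ × List ℕ | IsRightDyck ν PQ.1 PQ.2 ℓ} =
      (fun x => (x.1, moveEastSteps x.1 1 x.2 (x.2 + ℓ))) ''
        {Ps : List ℕ × ℕ | IsNuPath ν Ps.1 ∧ Ps.2 + ℓ < Ps.1.length ∧ 1 ≤ Ps.1.getD Ps.2 0 ∧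
          ∀ j, Ps.2 < j → j < Ps.2 + ℓ → Ps.1.getD j 0 = 0} := by
  ext ⟨P, Q⟩
  constructor
  · rintro ⟨hP, -, -, i, hi, hP1, hzero, hQ⟩
    exact ⟨(P, i), ⟨hP, hi, hP1, hzero⟩, congrArg (Prod.mk P) hQ.symm⟩
  · rintro ⟨⟨P, i⟩, ⟨hP, hi, hP1, hzero⟩, h⟩
    obtain ⟨rfl, rfl⟩ := Prod.mk.inj h
    exact ⟨hP, hP.moveEastSteps (by omega) hi hP1, hℓ, i, hi, hP1, hzero, rfl⟩

-- A marked north step is recorded by the index of the block just before it, a marked east step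
-- by the index of the block whose last east step it is.
theorem dyck_left_right_interval_count_general (ν : List ℕ) (ℓ : ℕ) (hℓ : 1 ≤ ℓ) :
    ({PQ : List ℕ × List ℕ | IsLeftDyck ν PQ.1 PQ.2 ℓ}.ncard =
      {Ps : List ℕ × ℕ | IsNuPath ν Ps.1 ∧ Ps.2 + 1 < Ps.1.length ∧
        ℓ ≤ Ps.1.getD Ps.2 0}.ncard) ∧
    ({PQ : List ℕ × List ℕ | IsRightDyck ν PQ.1 PQ.2 ℓ}.ncard =
      {Ps : List ℕ × ℕ | IsNuPath ν Ps.1 ∧ Ps.2 + ℓ < Ps.1.length ∧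
        1 ≤ Ps.1.getD Ps.2 0 ∧
        ∀ j, Ps.2 < j → j < Ps.2 + ℓ → Ps.1.getD j 0 = 0}.ncard) := by
  constructor
  · rw [setOf_isLeftDyck_eq_image hℓ]
    exact ncard_image_moveEastSteps hℓ one_pos fun x hx => hx.2
  · rw [setOf_isRightDyck_eq_image hℓ]
    exact ncard_image_moveEastSteps one_pos hℓ fun x hx => ⟨hx.2.1, hx.2.2.1⟩

/-- The number of left intervals of length `ℓ` in `D(ν)` equals
the number of pairs `(P, s)` of a ν-path `P` with a north step `s` immediately
preceded by at least `ℓ` consecutive east steps; the number of right intervals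
of length `ℓ` equals the number of pairs `(P, s)` of a ν-path `P` with an east
step `s` immediately followed by at least `ℓ` consecutive north steps.
(A north step is encoded by the index `i` of the block just before it, and a
marked east step by the index `i` of the block whose last east step it is.) -/
theorem dyck_left_right_interval_count (ν : List ℕ) (hν : ν ≠ []) (ℓ : ℕ) (hℓ : 1 ≤ ℓ) :
    ({PQ : List ℕ × List ℕ | IsLeftDyck ν PQ.1 PQ.2 ℓ}.ncard =
      {Ps : List ℕ × ℕ | IsNuPath ν Ps.1 ∧ Ps.2 + 1 < Ps.1.length ∧
        ℓ ≤ Ps.1.getD Ps.2 0}.ncard) ∧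
    ({PQ : List ℕ × List ℕ | IsRightDyck ν PQ.1 PQ.2 ℓ}.ncard =
      {Ps : List ℕ × ℕ | IsNuPath ν Ps.1 ∧ Ps.2 + ℓ < Ps.1.length ∧
        1 ≤ Ps.1.getD Ps.2 0 ∧
        ∀ j, Ps.2 < j → j < Ps.2 + ℓ → Ps.1.getD j 0 = 0}.ncard) :=
  dyck_left_right_interval_count_general ν ℓ hℓ
end

section
/- Let ν = (ν_0, …, ν_n) be a lattice path, δ an increment vector for ν, and define ν̌ = (ν̌_0, δ_1, …, δ_n) with ν̌_0 = Σ_{i=0}^n ν_i − Σ_{i=1}^n δ_i. Then ν̌ is a lattice path with the same endpoints as ν lying weakly below ν, i.e. Σ_{i=0}^j ν_i ≤ Σ_{i=0}^j ν̌_i for all 0 ≤ j ≤ n with equality for j = n. Moreover, for every ν-path μ (which is then also a ν̌-path), the δ-rotations of μ coincide with the ν̌-rotations of μ, i.e. the δ-rotation of μ at a valley equals the rotation at that valley taken with respect to the increment vector (ν̌_1, …, ν̌_n) = (δ_1, …, δ_n) viewed over ν̌. -/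
/-! The partial sums of ν̌ are ν̌_0 + δ_1 + ⋯ + δ_a = |ν| − (δ_{a+1} + ⋯ + δ_n), so ν̌ lies
weakly below ν because, termwise, the tail sums of δ are bounded by those of ν. Along any path,
the ν̌-altitude and the δ-altitude differ by the constant ν̌_0, so the excursions that define the
two rotations at a valley end in the same block. -/

theorem List.sum_take_add_sum_Ico_getD {M : Type*} [AddCommMonoid M] (l : List M) {a b : ℕ}
    (hab : a ≤ b) : (l.take a).sum + ∑ t ∈ Finset.Ico a b, l.getD t 0 = (l.take b).sum := by
  induction b, hab using Nat.le_induction with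
  | base => simp
  | succ b hab ih =>
    rw [Finset.sum_Ico_succ_top hab, ← add_assoc, ih, List.take_add_one, List.sum_append]
    cases h : l[b]? <;> simp [List.getD_eq_getElem?_getD, h]

theorem IsIncrement.forall₂_le_tail {ν δ : List ℕ} (h : IsIncrement ν δ) :
    List.Forall₂ (· ≤ ·) δ ν.tail := by
  obtain ⟨hlen, hle⟩ := h
  refine List.forall₂_of_length_eq_of_get (by simp; omega) fun t ht _ => ?_
  have ht' : t + 1 < ν.length := by omega
  simpa [List.getD_eq_getElem?_getD, ht, ht'] using hle t ht

theorem IsIncrement.sum_drop_le {ν δ : List ℕ} (h : IsIncrement ν δ) (a : ℕ) :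
    (δ.drop a).sum ≤ (ν.drop (a + 1)).sum := by
  simpa [List.drop_drop, Nat.add_comm] using
    (List.forall₂_drop a h.forall₂_le_tail).sum_le_sum

theorem sum_take_succ_nuCheck (ν δ : List ℕ) (a : ℕ) :
    ((nuCheck ν δ).take (a + 1)).sum = ν.sum - δ.sum + (δ.take a).sum := by
  simp [nuCheck]

theorem isNuPath_nuCheck {ν δ : List ℕ} (h : IsIncrement ν δ) : IsNuPath (nuCheck ν δ) ν := by
  have hsum : δ.sum ≤ ν.sum := by
    have hle := h.sum_drop_le 0
    have hν := ν.sum_take_add_sum_drop 1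
    rw [List.drop_zero, Nat.zero_add] at hle
    omega
  refine ⟨by simp [nuCheck, ← h.1], fun j => ?_, by simp [nuCheck]; omega⟩
  cases j with
  | zero => simp
  | succ a =>
    have hδ := List.sum_take_add_sum_drop δ a
    have hν := List.sum_take_add_sum_drop ν (a + 1)
    have := h.sum_drop_le a
    rw [sum_take_succ_nuCheck]
    omega

theorem isDeltaRotation_iff_isNuRotation_cons (c : ℕ) (δ μ μ' : List ℕ) (i : ℕ) :
    IsDeltaRotation δ μ μ' i ↔ IsNuRotation (c :: δ) μ μ' i := by
  have hω : ∀ k, i ≤ k → ((c :: δ).take (k + 1)).sum =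
      ((c :: δ).take (i + 1)).sum + ∑ t ∈ Finset.Ico i k, δ.getD t 0 := fun k hik => by
    simp only [List.take_succ_cons, List.sum_cons, ← δ.sum_take_add_sum_Ico_getD hik, add_assoc]
  have hμ : ∀ k, i ≤ k → (μ.take (k + 1)).sum =
      (μ.take (i + 1)).sum + ∑ t ∈ Finset.Ico (i + 1) (k + 1), μ.getD t 0 := fun k hik =>
    (μ.sum_take_add_sum_Ico_getD (Nat.succ_le_succ hik)).symm
  unfold IsDeltaRotation IsNuRotation
  refine and_congr_right fun _ => and_congr_right fun _ => exists_congr fun k =>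
    and_congr_right fun hik => and_congr_right fun _ => and_congr ?_ (and_congr ?_ Iff.rfl)
  · rw [hω k hik.le, hμ k hik.le]
    omega
  · refine forall_congr' fun k' => imp_congr_right fun hik' => imp_congr_right fun _ => ?_
    rw [hω k' hik'.le, hμ k' hik'.le]
    omega

theorem nuCheck_below_and_rotations_coincide_general (ν δ : List ℕ)
    (hδ : IsIncrement ν δ) :
    IsNuPath (nuCheck ν δ) ν ∧
    ∀ μ μ' : List ℕ, IsNuPath ν μ →
      ∀ i, (IsDeltaRotation δ μ μ' i ↔ IsNuRotation (nuCheck ν δ) μ μ' i) :=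
  ⟨isNuPath_nuCheck hδ, fun _ _ _ _ => isDeltaRotation_iff_isNuRotation_cons _ _ _ _ _⟩

/-- The path ν̌ = (ν̌_0, δ_1, …, δ_n), with
ν̌_0 = Σν_i − Σδ_i, is a lattice path with the same endpoints as `ν` lying
weakly below `ν` (i.e. `ν` is a ν̌-path).  Moreover, for every ν-path `μ`, the
δ-rotations of `μ` coincide with the ν̌-rotations of `μ`. -/
theorem nuCheck_below_and_rotations_coincide (ν δ : List ℕ) (hν : ν ≠ [])
    (hδ : IsIncrement ν δ) :
    IsNuPath (nuCheck ν δ) ν ∧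
    ∀ μ μ' : List ℕ, IsNuPath ν μ →
      ∀ i, (IsDeltaRotation δ μ μ' i ↔ IsNuRotation (nuCheck ν δ) μ μ' i) :=
  nuCheck_below_and_rotations_coincide_general ν δ hδ
end
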